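/- arXiv:1808.05555 — 3 statements merged into one kernel-verified Lean document; each statement's English description precedes it below -/
import Mathlib

section
/- Let A be an n×n diagonalizable matrix, A = V D V⁻¹ with D diagonal, eigenvalues λ_1,…,λ_n, and let δ = (1/2)·min{|λ_i − λ_j| : λ_i ≠ λ_j} (δ = +∞ if A has a single eigenvalue). If N is an n×n matrix with ‖N‖ < δ/κ₂(V), then the optimal matching distance between the spectra of A and A+N satisfies d(A, A+N) ≤ κ₂(V)·‖N‖. -/
open Filter MeasureTheory
open scoped Matrix
open Asymptotics
open scoped BigOperators

/-- The eigenvalues of a complex matrix, listed with multiplicity (in some fixed order). -/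
noncomputable def eigs {n : ℕ} (A : Matrix (Fin n) (Fin n) ℂ) : Fin n → ℂ :=
  fun i => (Matrix.charpoly A).roots.toList.getD i 0

/-- Optimal matching distance between two `n`-tuples of complex numbers. -/
noncomputable def matchDist {n : ℕ} (v w : Fin n → ℂ) : ℝ :=
  ⨅ σ : Equiv.Perm (Fin n), ⨆ i, ‖v i - w (σ i)‖

/-- Spectral norm (largest singular value) of a matrix. -/
noncomputable def specNorm {n : ℕ} (A : Matrix (Fin n) (Fin n) ℂ) : ℝ :=
  ‖Matrix.toEuclideanCLM (𝕜 := ℂ) A‖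

/-- Singular values of a matrix: square roots of eigenvalues of `Aᴴ * A`. -/
noncomputable def singVals {n : ℕ} (A : Matrix (Fin n) (Fin n) ℂ) : Fin n → ℝ :=
  fun i => Real.sqrt ((Matrix.isHermitian_conjTranspose_mul_self A).eigenvalues i)

/-- Trace (Schatten-1) norm. -/
noncomputable def traceNorm {n : ℕ} (A : Matrix (Fin n) (Fin n) ℂ) : ℝ :=
  ∑ i, singVals A i

/-- Schatten `p`-norm. -/
noncomputable def schattenNorm (p : ℝ) {n : ℕ} (A : Matrix (Fin n) (Fin n) ℂ) : ℝ :=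
  (∑ i, singVals A i ^ p) ^ (1 / p)

/-- Rearrangement of a real tuple in non-increasing order. -/
noncomputable def descSort {n : ℕ} (v : Fin n → ℝ) : Fin n → ℝ :=
  fun i => (v ∘ Tuple.sort v) i.rev

/-- The function `p(A) = min_{i=1..n+1} ((i-1)/n + σ_i(A))`, `σ_{n+1} = 0`. -/
noncomputable def pfun {n : ℕ} (A : Matrix (Fin n) (Fin n) ℂ) : ℝ :=
  ⨅ i : Fin (n + 1),
    ((i : ℝ) / n + if h : (i : ℕ) < n then descSort (singVals A) ⟨i, h⟩ else 0)

/-- Generalized optimal matching distance between two `n`-tuples. -/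
noncomputable def gMatchDist {n : ℕ} (v w : Fin n → ℂ) : ℝ :=
  ⨅ σ : Equiv.Perm (Fin n), ⨅ i : Fin n,
    ((i : ℝ) / n + descSort (fun j => ‖v j - w (σ j)‖) i)

/-- A matrix-sequence. -/
abbrev MatSeq := (n : ℕ) → Matrix (Fin n) (Fin n) ℂ

/-- `f : D → ℂ` is a spectral symbol (in the Weyl sense) of the matrix-sequence `A`. -/
def SymbolOf {q : ℕ} (A : MatSeq) (D : Set (Fin q → ℝ)) (f : (Fin q → ℝ) → ℂ) : Prop :=
  MeasurableSet D ∧ volume D ≠ 0 ∧ volume D ≠ ⊤ ∧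
  ∀ F : ℂ → ℂ, Continuous F → HasCompactSupport F →
    Tendsto (fun n : ℕ => (n : ℂ)⁻¹ * ∑ i, F (eigs (A n) i)) atTop
      (nhds (((volume D).toReal)⁻¹ • ∫ x in D, F (f x)))

/-- Asymptotic optimal matching pseudodistance between matrix-sequences. -/
noncomputable def dSeq (A B : MatSeq) : ℝ :=
  Filter.atTop.limsup fun n => matchDist (eigs (A n)) (eigs (B n))

/-- Asymptotic generalized optimal matching pseudodistance. -/
noncomputable def dSeq' (A B : MatSeq) : ℝ :=
  Filter.atTop.limsup fun n => gMatchDist (eigs (A n)) (eigs (B n))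

/-- Hermitian (real) part of a matrix. -/
noncomputable def reM {n : ℕ} (M : Matrix (Fin n) (Fin n) ℂ) : Matrix (Fin n) (Fin n) ℂ :=
  (2 : ℂ)⁻¹ • (M + Mᴴ)

/-- Skew part of a matrix, `(M - Mᴴ)/(2i)`. -/
noncomputable def imM {n : ℕ} (M : Matrix (Fin n) (Fin n) ℂ) : Matrix (Fin n) (Fin n) ℂ :=
  (2 * Complex.I)⁻¹ • (M - Mᴴ)

/-- The acs pseudodistance. -/
noncomputable def dacs (A B : MatSeq) : ℝ := Filter.atTop.limsup fun n => pfun (A n - B n)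

/-- `p_N(A) = limsup ‖A_n‖₁ / n`. -/
noncomputable def pN (A : MatSeq) : ℝ := Filter.atTop.limsup fun n => traceNorm (A n) / n

/-- The pseudodistance `d_H`. -/
noncomputable def dH (A B : MatSeq) : ℝ :=
  dacs (fun n => reM (A n)) (fun n => reM (B n)) +
    pN (fun n => imM (A n)) + pN (fun n => imM (B n))

/-! The Bauer–Fike argument: if `μ` is an eigenvalue of `V D W + E` with `W V = 1`, it is an
eigenvalue of `D + W E V`, and an eigenvector `y` satisfies `(μ - dᵢ) yᵢ = (W E V y)ᵢ`, whence
`minᵢ |μ - dᵢ| ≤ ‖W E V‖ ≤ κ₂(V) ‖E‖`. Along the path `A + t N`, `0 ≤ t ≤ 1`, all eigenvalues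
therefore stay in the closed disks of radius `r = κ₂(V) ‖N‖` around the `dᵢ`, and disks around
distinct `dᵢ` are disjoint. The number of eigenvalues in each disk is locally constant in `t`,
because the eigenvalue tuples of a convergent sequence of matrices have a subsequence converging
to an enumeration of the eigenvalues of the limit; so it is the same for `A` and `A + N`, and the
eigenvalues can be matched disk by disk. -/
open Polynomial Matrix Topology

section SpectralNorm

variable {n : ℕ}

lemma specNorm_nonneg (A : Matrix (Fin n) (Fin n) ℂ) : 0 ≤ specNorm A :=
  norm_nonneg _

lemma specNorm_mul_le (A B : Matrix (Fin n) (Fin n) ℂ) :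
    specNorm (A * B) ≤ specNorm A * specNorm B := by
  simpa only [specNorm, map_mul] using norm_mul_le _ _

lemma specNorm_smul (c : ℂ) (A : Matrix (Fin n) (Fin n) ℂ) :
    specNorm (c • A) = ‖c‖ * specNorm A := by
  simp only [specNorm, map_smul, norm_smul]

lemma norm_toLp_mulVec_le (A : Matrix (Fin n) (Fin n) ℂ) (y : Fin n → ℂ) :
    ‖WithLp.toLp 2 (A *ᵥ y)‖ ≤ specNorm A * ‖WithLp.toLp 2 y‖ := by
  simpa only [specNorm, toEuclideanCLM_toLp] using
    (toEuclideanCLM (𝕜 := ℂ) A).le_opNorm (WithLp.toLp 2 y)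

end SpectralNorm

lemma mul_norm_toLp_le_norm_toLp_mul {ι : Type*} [Fintype ι] {m : ℝ} (hm : 0 ≤ m)
    {c y : ι → ℂ} (hc : ∀ i, m ≤ ‖c i‖) :
    m * ‖WithLp.toLp 2 y‖ ≤ ‖WithLp.toLp 2 (c * y)‖ := by
  rw [← pow_le_pow_iff_left₀ (by positivity) (norm_nonneg _) two_ne_zero, mul_pow,
    EuclideanSpace.norm_sq_eq, EuclideanSpace.norm_sq_eq, Finset.mul_sum]
  refine Finset.sum_le_sum fun i _ => ?_
  simp only [Pi.mul_apply, norm_mul, mul_pow]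
  gcongr
  exact hc i

lemma exists_mulVec_eq_smul_of_mem_roots_charpoly {m K : Type*} [Fintype m] [DecidableEq m]
    [Field K] {M : Matrix m m K} {μ : K} (hμ : μ ∈ M.charpoly.roots) :
    ∃ y ≠ 0, M *ᵥ y = μ • y := by
  have hdet : (scalar m μ - M).det = 0 := by
    rw [← eval_charpoly]
    exact (mem_roots M.charpoly_monic.ne_zero).1 hμ
  obtain ⟨y, hy0, hy⟩ := exists_mulVec_eq_zero_iff.2 hdet
  refine ⟨y, hy0, ?_⟩
  rw [sub_mulVec, sub_eq_zero] at hy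
  ext i
  simp [← hy, mulVec_diagonal]

theorem exists_norm_sub_le_specNorm_of_mem_roots_diagonal_add {n : ℕ} {d : Fin n → ℂ}
    {K : Matrix (Fin n) (Fin n) ℂ} {μ : ℂ} (hμ : μ ∈ (diagonal d + K).charpoly.roots) :
    ∃ i, ‖μ - d i‖ ≤ specNorm K := by
  obtain ⟨y, hy0, hy⟩ := exists_mulVec_eq_smul_of_mem_roots_charpoly hμ
  have hKy : K *ᵥ y = (fun i => μ - d i) * y := by
    ext i
    have := congrFun hy i
    simp only [add_mulVec, Pi.add_apply, mulVec_diagonal, Pi.smul_apply, smul_eq_mul] at this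
    simp only [Pi.mul_apply]
    linear_combination this
  have hY : 0 < ‖WithLp.toLp 2 y‖ := by
    rwa [norm_pos_iff, ne_eq, WithLp.toLp_eq_zero]
  have : Nonempty (Fin n) := by
    obtain ⟨i, -⟩ := Function.ne_iff.1 hy0
    exact ⟨i⟩
  obtain ⟨i, hi⟩ := Finite.exists_min fun i => ‖μ - d i‖
  refine ⟨i, le_of_mul_le_mul_right ?_ hY⟩
  calc ‖μ - d i‖ * ‖WithLp.toLp 2 y‖ ≤ ‖WithLp.toLp 2 (K *ᵥ y)‖ := by
        rw [hKy]
        exact mul_norm_toLp_le_norm_toLp_mul (norm_nonneg _) hi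
    _ ≤ specNorm K * ‖WithLp.toLp 2 y‖ := norm_toLp_mulVec_le K y

lemma charpoly_mul_mul_eq_of_mul_eq_one {m R : Type*} [Fintype m] [DecidableEq m] [CommRing R]
    {V W : Matrix m m R} (hWV : W * V = 1) (B : Matrix m m R) :
    (V * B * W).charpoly = B.charpoly := by
  rw [charpoly_mul_comm, ← Matrix.mul_assoc, hWV, Matrix.one_mul]

theorem bauer_fike {n : ℕ} {V W E : Matrix (Fin n) (Fin n) ℂ} {d : Fin n → ℂ} (hWV : W * V = 1)
    {μ : ℂ} (hμ : μ ∈ (V * diagonal d * W + E).charpoly.roots) :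
    ∃ i, ‖μ - d i‖ ≤ specNorm V * specNorm W * specNorm E := by
  have hVW : V * W = 1 := mul_eq_one_comm.1 hWV
  have hconj : V * diagonal d * W + E = V * (diagonal d + W * E * V) * W := by
    simp only [Matrix.mul_add, Matrix.add_mul, Matrix.mul_assoc, hVW, Matrix.mul_one]
    rw [← Matrix.mul_assoc V W, hVW, Matrix.one_mul]
  rw [hconj, charpoly_mul_mul_eq_of_mul_eq_one hWV] at hμ
  obtain ⟨i, hi⟩ := exists_norm_sub_le_specNorm_of_mem_roots_diagonal_add hμ
  refine ⟨i, hi.trans ?_⟩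
  calc specNorm (W * E * V) ≤ specNorm W * specNorm E * specNorm V :=
        (specNorm_mul_le _ _).trans
          (mul_le_mul_of_nonneg_right (specNorm_mul_le _ _) (specNorm_nonneg _))
    _ = specNorm V * specNorm W * specNorm E := by ring

lemma exists_mem_closedBall_of_mem_roots_add_smul {n : ℕ} {V W N : Matrix (Fin n) (Fin n) ℂ}
    {d : Fin n → ℂ} (hWV : W * V = 1) {c : ℂ} (hc : ‖c‖ ≤ 1) {z : ℂ}
    (hz : z ∈ (V * diagonal d * W + c • N).charpoly.roots) :
    ∃ i, z ∈ Metric.closedBall (d i) (specNorm V * specNorm W * specNorm N) := by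
  obtain ⟨i, hi⟩ := bauer_fike hWV hz
  refine ⟨i, mem_closedBall_iff_norm.2 (hi.trans ?_)⟩
  rw [specNorm_smul]
  exact mul_le_mul_of_nonneg_left (mul_le_of_le_one_left (specNorm_nonneg N) hc)
    (mul_nonneg (specNorm_nonneg V) (specNorm_nonneg W))

lemma card_roots_charpoly {n : ℕ} (M : Matrix (Fin n) (Fin n) ℂ) :
    Multiset.card M.charpoly.roots = n := by
  rw [splits_iff_card_roots.1 (IsAlgClosed.splits _), charpoly_natDegree_eq_dim,
    Fintype.card_fin]

lemma map_eigs_univ {n : ℕ} (M : Matrix (Fin n) (Fin n) ℂ) :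
    Multiset.map (eigs M) Finset.univ.val = M.charpoly.roots := by
  have hlen : M.charpoly.roots.toList.length = n := by
    rw [Multiset.length_toList, card_roots_charpoly]
  rw [Fin.univ_val_map, ← Multiset.coe_toList M.charpoly.roots]
  congr 1
  refine List.ext_getElem (by rw [List.length_ofFn, hlen]) fun i h₁ h₂ => ?_
  simp [eigs, List.getElem?_eq_getElem h₂]

lemma prod_X_sub_C_eq_prod_map {ι R : Type*} [Fintype ι] [CommRing R] (f : ι → R) :
    ∏ i, (X - C (f i)) = ((Multiset.map f Finset.univ.val).map fun a => X - C a).prod := by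
  rw [Multiset.map_map]
  rfl

lemma charpoly_eq_prod_eigs {n : ℕ} (M : Matrix (Fin n) (Fin n) ℂ) :
    M.charpoly = ∏ j, (X - C (eigs M j)) := by
  rw [prod_X_sub_C_eq_prod_map, map_eigs_univ]
  exact (IsAlgClosed.splits _).eq_prod_roots_of_monic M.charpoly_monic

lemma charpoly_eq_prod_of_tendsto {m ι K : Type*} [Fintype m] [DecidableEq m] [Field K]
    [Infinite K] [TopologicalSpace K] [IsTopologicalRing K] [T2Space K]
    {l : Filter ι} [l.NeBot] {M : ι → Matrix m m K} {M₀ : Matrix m m K} {e : ι → m → K}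
    {f : m → K} (hM : Tendsto M l (𝓝 M₀)) (he : Tendsto e l (𝓝 f))
    (hMe : ∀ k, (M k).charpoly = ∏ j, (X - C (e k j))) :
    M₀.charpoly = ∏ j, (X - C (f j)) := by
  refine Polynomial.funext fun z => ?_
  have hdet : Continuous fun A : Matrix m m K => (scalar m z - A).det :=
    (continuous_const.sub continuous_id).matrix_det
  have hprod : Continuous fun g : m → K => ∏ j, (z - g j) :=
    continuous_finsetProd _ fun j _ => continuous_const.sub (continuous_apply j)
  have hMe' : ∀ k, (scalar m z - M k).det = ∏ j, (z - e k j) := fun k => by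
    simpa only [eval_charpoly, eval_prod, eval_sub, eval_X, eval_C] using
      congrArg (eval z) (hMe k)
  rw [eval_charpoly, eval_prod]
  simp only [eval_sub, eval_X, eval_C]
  exact tendsto_nhds_unique ((hdet.tendsto M₀).comp hM)
    (((hprod.tendsto f).comp he).congr fun k => (hMe' k).symm)

lemma eventually_mem_iff_of_tendsto {X ι : Type*} [TopologicalSpace X] {U F : Set X}
    (hU : IsClosed U) (hF : IsClosed F) (hUF : Disjoint U F) {l : Filter ι} {x : ι → X}
    {a : X} (hx : Tendsto x l (𝓝 a)) (hxUF : ∀ i, x i ∈ U ∪ F) :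
    ∀ᶠ i in l, x i ∈ U ↔ a ∈ U := by
  by_cases ha : a ∈ U
  · filter_upwards [hx.eventually (hF.isOpen_compl.mem_nhds (hUF.notMem_of_mem_left ha))]
      with i hi
    simpa [ha] using (hxUF i).resolve_right hi
  · filter_upwards [hx.eventually (hU.isOpen_compl.mem_nhds ha)] with i hi
    simpa [ha] using hi

open scoped Classical in
lemma exists_subseq_eventually_countP_roots_eq {n : ℕ} {M : ℕ → Matrix (Fin n) (Fin n) ℂ}
    {M₀ : Matrix (Fin n) (Fin n) ℂ} (hM : Tendsto M atTop (𝓝 M₀)) {U F : Set ℂ}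
    (hU : IsCompact U) (hF : IsCompact F) (hUF : Disjoint U F)
    (hroots : ∀ k, ∀ z ∈ (M k).charpoly.roots, z ∈ U ∪ F) :
    ∃ φ : ℕ → ℕ, ∀ᶠ k in atTop,
      (M (φ k)).charpoly.roots.countP (· ∈ U) = M₀.charpoly.roots.countP (· ∈ U) := by
  have heigs : ∀ k, eigs (M k) ∈ Set.univ.pi fun _ => U ∪ F := fun k j _ =>
    hroots k _ (map_eigs_univ (M k) ▸ Multiset.mem_map_of_mem _ (Finset.mem_univ j))
  obtain ⟨f, -, φ, hφ, hf⟩ := (isCompact_univ_pi fun _ => hU.union hF).tendsto_subseq heigs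
  have hM₀ : M₀.charpoly = ∏ j, (X - C (f j)) :=
    charpoly_eq_prod_of_tendsto (hM.comp hφ.tendsto_atTop) hf fun k => charpoly_eq_prod_eigs _
  have hroots₀ : M₀.charpoly.roots = Multiset.map f Finset.univ.val := by
    rw [hM₀, prod_X_sub_C_eq_prod_map, roots_multiset_prod_X_sub_C]
  have hev : ∀ᶠ k in atTop, ∀ j, (eigs (M (φ k)) j ∈ U ↔ f j ∈ U) :=
    eventually_all.2 fun j => eventually_mem_iff_of_tendsto hU.isClosed hF.isClosed hUF
      (((continuous_apply j).tendsto f).comp hf) fun k => heigs (φ k) j (Set.mem_univ _)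
  refine ⟨φ, hev.mono fun k hk => ?_⟩
  rw [← map_eigs_univ, hroots₀, Multiset.countP_map, Multiset.countP_map]
  exact congrArg _ (Multiset.filter_congr fun j _ => hk j)

open scoped Classical in
theorem countP_roots_charpoly_eq {X : Type*} [TopologicalSpace X] [SequentialSpace X]
    [PreconnectedSpace X] {n : ℕ} {M : X → Matrix (Fin n) (Fin n) ℂ} (hM : Continuous M)
    {U F : Set ℂ} (hU : IsCompact U) (hF : IsCompact F) (hUF : Disjoint U F)
    (hroots : ∀ u, ∀ z ∈ (M u).charpoly.roots, z ∈ U ∪ F) (u v : X) :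
    (M u).charpoly.roots.countP (· ∈ U) = (M v).charpoly.roots.countP (· ∈ U) := by
  refine PreconnectedSpace.constant (f := fun w => (M w).charpoly.roots.countP (· ∈ U)) ‹_›
    (continuous_iff_seqContinuous.2 fun x t hx => ?_)
  refine tendsto_of_subseq_tendsto fun ns hns => ?_
  obtain ⟨φ, hφ⟩ := exists_subseq_eventually_countP_roots_eq
    ((hM.tendsto t).comp (hx.comp hns)) hU hF hUF fun k => hroots _
  exact ⟨φ, tendsto_const_nhds.congr' (hφ.mono fun k hk => hk.symm)⟩

section Separated

variable {α ι : Type*} [PseudoMetricSpace α] {d : ι → α} {r : ℝ}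

lemma eq_of_mem_closedBall_of_separated (hsep : ∀ i j, d i ≠ d j → 2 * r < dist (d i) (d j))
    {z : α} {i j : ι} (hi : z ∈ Metric.closedBall (d i) r) (hj : z ∈ Metric.closedBall (d j) r) :
    d i = d j := by
  by_contra h
  have := (hsep i j h).trans_le (dist_triangle_left _ _ z)
  rw [Metric.mem_closedBall] at hi hj
  linarith

lemma disjoint_closedBall_biUnion_closedBall
    (hsep : ∀ i j, d i ≠ d j → 2 * r < dist (d i) (d j)) (i : ι) :
    Disjoint (Metric.closedBall (d i) r) (⋃ j ∈ {j | d j ≠ d i}, Metric.closedBall (d j) r) :=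
  Set.disjoint_left.2 fun _ hz hz' => by
    obtain ⟨j, hj, hzj⟩ := Set.mem_iUnion₂.1 hz'
    exact hj (eq_of_mem_closedBall_of_separated hsep hzj hz)

open scoped Classical in
lemma map_comp_univ_eq_of_countP_closedBall_eq [Fintype ι] {κ : Type*} [Fintype κ] (hr : 0 ≤ r)
    (hsep : ∀ i j, d i ≠ d j → 2 * r < dist (d i) (d j)) {μ : κ → α} {c : κ → ι}
    (hc : ∀ j, μ j ∈ Metric.closedBall (d (c j)) r)
    (hcount : ∀ i, (Multiset.map μ Finset.univ.val).countP (· ∈ Metric.closedBall (d i) r) =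
      (Multiset.map d Finset.univ.val).countP (· ∈ Metric.closedBall (d i) r)) :
    Multiset.map (d ∘ c) Finset.univ.val = Multiset.map d Finset.univ.val := by
  ext a
  by_cases ha : ∃ i, d i = a
  · obtain ⟨i, rfl⟩ := ha
    have h := hcount i
    rw [Multiset.countP_map, Multiset.countP_map] at h
    rw [Multiset.count_map, Multiset.count_map]
    convert h using 2
    · refine Multiset.filter_congr fun j _ => ⟨fun hj => ?_, fun hj => ?_⟩
      · exact hj ▸ hc j
      · exact eq_of_mem_closedBall_of_separated hsep hj (hc j)
    · refine Multiset.filter_congr fun l _ => ⟨fun hl => ?_, fun hl => ?_⟩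
      · exact hl ▸ Metric.mem_closedBall_self hr
      · exact eq_of_mem_closedBall_of_separated hsep hl (Metric.mem_closedBall_self hr)
  · rw [not_exists] at ha
    rw [Multiset.count_eq_zero.2, Multiset.count_eq_zero.2] <;> simp [ha]

end Separated

open scoped Classical in
theorem countP_roots_charpoly_closedBall_eq {ι X : Type*} [Finite ι] [TopologicalSpace X]
    [SequentialSpace X] [PreconnectedSpace X] {n : ℕ} {d : ι → ℂ} {r : ℝ}
    (hsep : ∀ i j, d i ≠ d j → 2 * r < dist (d i) (d j)) {M : X → Matrix (Fin n) (Fin n) ℂ}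
    (hM : Continuous M)
    (hnear : ∀ u, ∀ z ∈ (M u).charpoly.roots, ∃ j, z ∈ Metric.closedBall (d j) r)
    (i : ι) (u v : X) :
    (M u).charpoly.roots.countP (· ∈ Metric.closedBall (d i) r) =
      (M v).charpoly.roots.countP (· ∈ Metric.closedBall (d i) r) := by
  refine countP_roots_charpoly_eq hM (isCompact_closedBall (d i) r)
    ((Set.toFinite _).isCompact_biUnion fun j _ => isCompact_closedBall (d j) r)
    (disjoint_closedBall_biUnion_closedBall hsep i) (fun w z hz => ?_) u v
  obtain ⟨j, hj⟩ := hnear w z hz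
  by_cases hji : d j = d i
  · exact Or.inl (hji ▸ hj)
  · exact Or.inr (Set.mem_iUnion₂.2 ⟨j, hji, hj⟩)

lemma exists_perm_apply_eq_of_map_univ_eq {ι α : Type*} [Fintype ι] [DecidableEq α]
    {f g : ι → α} (h : Multiset.map f Finset.univ.val = Multiset.map g Finset.univ.val) :
    ∃ σ : Equiv.Perm ι, ∀ i, g (σ i) = f i := by
  classical
  have hfib : ∀ a, Fintype.card {i // f i = a} = Fintype.card {i // g i = a} := fun a => by
    simpa [Fintype.card_subtype, Finset.card_def, Finset.filter_val, Multiset.count_map,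
      eq_comm] using
      congrArg (Multiset.count a) h
  exact ⟨Equiv.ofFiberEquiv fun a => Fintype.equivOfCardEq (hfib a), Equiv.ofFiberEquiv_map _⟩

lemma matchDist_le_of_map_univ_eq {n : ℕ} {v w μ : Fin n → ℂ} {r : ℝ} (hr : 0 ≤ r)
    (hvw : Multiset.map w Finset.univ.val = Multiset.map v Finset.univ.val)
    (hw : ∀ j, ‖w j - μ j‖ ≤ r) : matchDist v μ ≤ r := by
  classical
  obtain ⟨σ, hσ⟩ := exists_perm_apply_eq_of_map_univ_eq hvw.symm
  have hbdd : BddBelow (Set.range fun τ : Equiv.Perm (Fin n) => ⨆ i, ‖v i - μ (τ i)‖) :=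
    ⟨0, Set.forall_mem_range.2 fun τ => Real.iSup_nonneg fun i => norm_nonneg _⟩
  refine ciInf_le_of_le hbdd σ (Real.iSup_le (fun i => ?_) hr)
  rw [← hσ i]
  exact hw (σ i)

open scoped Classical in
lemma matchDist_le_of_countP_closedBall_eq {n : ℕ} {v μ d : Fin n → ℂ} {r : ℝ} (hr : 0 ≤ r)
    (hsep : ∀ i j, d i ≠ d j → 2 * r < dist (d i) (d j))
    (hv : Multiset.map v Finset.univ.val = Multiset.map d Finset.univ.val)
    (hμ : ∀ j, ∃ i, μ j ∈ Metric.closedBall (d i) r)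
    (hcount : ∀ i, (Multiset.map μ Finset.univ.val).countP (· ∈ Metric.closedBall (d i) r) =
      (Multiset.map d Finset.univ.val).countP (· ∈ Metric.closedBall (d i) r)) :
    matchDist v μ ≤ r := by
  choose c hc using hμ
  refine matchDist_le_of_map_univ_eq (w := d ∘ c) hr ?_ fun j => ?_
  · rw [hv]
    exact map_comp_univ_eq_of_countP_closedBall_eq hr hsep hc hcount
  · rw [← dist_eq_norm, dist_comm]
    exact hc j

lemma roots_charpoly_eq_map_of_eq_conj_diagonal {n : ℕ} {A V W : Matrix (Fin n) (Fin n) ℂ}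
    {d : Fin n → ℂ} (hWV : W * V = 1) (hA : A = V * diagonal d * W) :
    A.charpoly.roots = Multiset.map d Finset.univ.val := by
  rw [hA, charpoly_mul_mul_eq_of_mul_eq_one hWV, charpoly_diagonal, prod_X_sub_C_eq_prod_map,
    roots_multiset_prod_X_sub_C]

/-- `W` plays the role of `V⁻¹`, and the hypothesis `‖N‖ < δ / κ₂(V)` is stated pair by pair,
so that it is vacuous when `A` has a single eigenvalue. -/
theorem stmt_1_general {n : ℕ} (A V W : Matrix (Fin n) (Fin n) ℂ) (d : Fin n → ℂ)
    (hWV : W * V = 1)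
    (hA : A = V * Matrix.diagonal d * W)
    (N : Matrix (Fin n) (Fin n) ℂ)
    (hN : ∀ i j : Fin n, d i ≠ d j →
      specNorm V * specNorm W * specNorm N < (1 / 2) * ‖d i - d j‖) :
    matchDist (eigs A) (eigs (A + N)) ≤ specNorm V * specNorm W * specNorm N := by
  classical
  set r := specNorm V * specNorm W * specNorm N
  have hr : 0 ≤ r :=
    mul_nonneg (mul_nonneg (specNorm_nonneg V) (specNorm_nonneg W)) (specNorm_nonneg N)
  have hsep : ∀ i j, d i ≠ d j → 2 * r < dist (d i) (d j) := fun i j h => by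
    rw [dist_eq_norm]
    linarith [hN i j h]
  have hM : Continuous fun t : unitInterval => A + (t : ℂ) • N :=
    continuous_const.add ((Complex.continuous_ofReal.comp continuous_subtype_val).smul
      continuous_const)
  have hnear : ∀ t : unitInterval, ∀ z ∈ (A + (t : ℂ) • N).charpoly.roots,
      ∃ i, z ∈ Metric.closedBall (d i) r := fun t z hz => by
    rw [hA] at hz
    refine exists_mem_closedBall_of_mem_roots_add_smul hWV ?_ hz
    rw [Complex.norm_real, Real.norm_of_nonneg t.2.1]
    exact t.2.2
  have hdA := roots_charpoly_eq_map_of_eq_conj_diagonal hWV hA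
  refine matchDist_le_of_countP_closedBall_eq hr hsep (by rw [map_eigs_univ, hdA])
    (fun j => by simpa using hnear 1 (eigs (A + N) j) (by simp [← map_eigs_univ])) fun i => ?_
  rw [map_eigs_univ, ← hdA]
  simpa using countP_roots_charpoly_closedBall_eq hsep hM hnear i 1 0

/-- Bauer–Fike type bound for diagonalizable matrices:
if `A = V D V⁻¹` with `D = diagonal d`, and `‖N‖ < δ / κ₂(V)` where
`δ = (1/2) min_{d i ≠ d j} |d i - d j|` (`+∞` if `A` has a single eigenvalue),
then `d(A, A+N) ≤ κ₂(V)·‖N‖`.  Here `W = V⁻¹` and `κ₂(V) = ‖V‖·‖W‖`;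
the condition `‖N‖ < δ/κ₂(V)` is expressed pairwise (it is vacuous when `δ = +∞`). -/
theorem stmt_1 {n : ℕ} (A V W : Matrix (Fin n) (Fin n) ℂ) (d : Fin n → ℂ)
    (hVW : V * W = 1) (hWV : W * V = 1)
    (hA : A = V * Matrix.diagonal d * W)
    (N : Matrix (Fin n) (Fin n) ℂ)
    (hN : ∀ i j : Fin n, d i ≠ d j →
      specNorm V * specNorm W * specNorm N < (1 / 2) * ‖d i - d j‖) :
    matchDist (eigs A) (eigs (A + N)) ≤ specNorm V * specNorm W * specNorm N :=
  stmt_1_general A V W d hWV hA N hN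
end

section
/- Let d_n be a pseudometric on ℂ^{n×n} for each n, all bounded by a common constant L > 0. Then d({A_n}, {B_n}) := limsup_{n→∞} d_n(A_n, B_n) is a complete pseudometric on the space of matrix-sequences. -/
open Filter MeasureTheory
open scoped Matrix
open Asymptotics
open scoped BigOperators

/-!
Since all `d n` take values in `[0, L]`, the limsups involved are those of bounded real sequences,
so the pseudometric axioms pass from `d n` to the limsup. For completeness, extract from a Cauchy sequence
a subsequence `u` with `limsup_n d n (u k n) (u (k+1) n) < 2⁻ᵏ`; this bound holds pointwise for
`n ≥ N k`, with `N` strictly increasing. The diagonal sequence `B n := u (k n) n`, where `k n` is the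
largest `k` with `N k ≤ n`, satisfies `d n (u k n) (B n) ≤ 2 · 2⁻ᵏ` for `n ≥ N k` by telescoping,
so `u k → B`, and a Cauchy sequence with a convergent subsequence converges.
-/

noncomputable def limsupDist {X : ℕ → Type*} (d : ∀ n, X n → X n → ℝ) (x y : ∀ n, X n) : ℝ :=
  atTop.limsup fun n => d n (x n) (y n)

section LimsupDist

variable {X : ℕ → Type*} {d : ∀ n, X n → X n → ℝ} {L : ℝ}

theorem isBoundedUnder_le_dist (h_bdd : ∀ n a b, d n a b ≤ L) (x y : ∀ n, X n) :
    atTop.IsBoundedUnder (· ≤ ·) fun n => d n (x n) (y n) :=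
  isBoundedUnder_of ⟨L, fun n => h_bdd n _ _⟩

theorem isCoboundedUnder_le_dist (h_nonneg : ∀ n a b, 0 ≤ d n a b) (x y : ∀ n, X n) :
    atTop.IsCoboundedUnder (· ≤ ·) fun n => d n (x n) (y n) :=
  (isBoundedUnder_of ⟨0, fun n => h_nonneg n _ _⟩).isCoboundedUnder_le

theorem limsupDist_nonneg (h_nonneg : ∀ n a b, 0 ≤ d n a b) (h_bdd : ∀ n a b, d n a b ≤ L)
    (x y : ∀ n, X n) : 0 ≤ limsupDist d x y :=
  le_limsup_of_frequently_le (.of_forall fun n => h_nonneg n _ _) (isBoundedUnder_le_dist h_bdd x y)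

theorem limsupDist_self (h_refl : ∀ n a, d n a a = 0) (x : ∀ n, X n) : limsupDist d x x = 0 := by
  simp [limsupDist, h_refl]

theorem limsupDist_comm (h_symm : ∀ n a b, d n a b = d n b a) (x y : ∀ n, X n) :
    limsupDist d x y = limsupDist d y x := by
  simp only [limsupDist, h_symm]

theorem limsupDist_triangle (h_nonneg : ∀ n a b, 0 ≤ d n a b)
    (h_tri : ∀ n a b c, d n a c ≤ d n a b + d n b c) (h_bdd : ∀ n a b, d n a b ≤ L)
    (x y z : ∀ n, X n) : limsupDist d x z ≤ limsupDist d x y + limsupDist d y z :=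
  calc limsupDist d x z
      ≤ atTop.limsup ((fun n => d n (x n) (y n)) + fun n => d n (y n) (z n)) :=
        limsup_le_limsup (.of_forall fun n => h_tri n _ _ _) (isCoboundedUnder_le_dist h_nonneg x z)
          (isBoundedUnder_of ⟨L + L, fun n => add_le_add (h_bdd n _ _) (h_bdd n _ _)⟩)
    _ ≤ limsupDist d x y + limsupDist d y z :=
        limsup_add_le (isBoundedUnder_of ⟨0, fun n => h_nonneg n _ _⟩)
          (isBoundedUnder_le_dist h_bdd x y) (isCoboundedUnder_le_dist h_nonneg y z)
          (isBoundedUnder_le_dist h_bdd y z)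

theorem limsupDist_le_of_eventually_le (h_nonneg : ∀ n a b, 0 ≤ d n a b) {x y : ∀ n, X n} {c : ℝ}
    (h : ∀ᶠ n in atTop, d n (x n) (y n) ≤ c) : limsupDist d x y ≤ c :=
  limsup_le_of_le (isCoboundedUnder_le_dist h_nonneg x y) h

theorem le_two_mul_half_pow_sub_of_step_le {Y : Type*} {δ : Y → Y → ℝ} (h_refl : ∀ a, δ a a = 0)
    (h_tri : ∀ a b c, δ a c ≤ δ a b + δ b c) {v : ℕ → Y} {k m : ℕ} (hkm : k ≤ m)
    (hstep : ∀ j, k ≤ j → j < m → δ (v j) (v (j + 1)) ≤ (1 / 2 : ℝ) ^ j) :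
    δ (v k) (v m) ≤ 2 * (1 / 2 : ℝ) ^ k - 2 * (1 / 2 : ℝ) ^ m := by
  induction m, hkm using Nat.le_induction with
  | base => simp [h_refl]
  | succ m hkm ih =>
    have h_prev := ih fun j hkj hjm => hstep j hkj (hjm.trans m.lt_succ_self)
    have h_last := hstep m hkm m.lt_succ_self
    calc δ (v k) (v (m + 1)) ≤ δ (v k) (v m) + δ (v m) (v (m + 1)) := h_tri _ _ _
      _ ≤ 2 * (1 / 2 : ℝ) ^ k - 2 * (1 / 2 : ℝ) ^ (m + 1) := by rw [pow_succ]; linarith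

theorem exists_limsupDist_le_of_limsupDist_succ_lt (h_nonneg : ∀ n a b, 0 ≤ d n a b)
    (h_refl : ∀ n a, d n a a = 0) (h_tri : ∀ n a b c, d n a c ≤ d n a b + d n b c)
    (h_bdd : ∀ n a b, d n a b ≤ L) {u : ℕ → ∀ n, X n}
    (hu : ∀ k, limsupDist d (u k) (u (k + 1)) < (1 / 2 : ℝ) ^ k) :
    ∃ B : ∀ n, X n, ∀ k, limsupDist d (u k) B ≤ 2 * (1 / 2 : ℝ) ^ k := by
  obtain ⟨N, hN_mono, hN⟩ : ∃ N : ℕ → ℕ, StrictMono N ∧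
      ∀ k, ∀ n, N k ≤ n → d n (u k n) (u (k + 1) n) < (1 / 2 : ℝ) ^ k :=
    extraction_forall_of_eventually fun k => eventually_forall_ge_atTop.2 <|
      eventually_lt_of_limsup_lt (hu k) (isBoundedUnder_le_dist h_bdd _ _)
  let idx n := Nat.findGreatest (fun k => N k ≤ n) n
  have le_idx {k n} (h : N k ≤ n) : k ≤ idx n := Nat.le_findGreatest (hN_mono.le_apply.trans h) h
  have N_idx_le {k n} (h : N k ≤ n) : N (idx n) ≤ n :=
    Nat.findGreatest_spec (P := fun k => N k ≤ n) (hN_mono.le_apply.trans h) h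
  refine ⟨fun n => u (idx n) n, fun k => limsupDist_le_of_eventually_le h_nonneg ?_⟩
  filter_upwards [eventually_ge_atTop (N k)] with n hn
  have h_chain := le_two_mul_half_pow_sub_of_step_le (δ := d n) (v := fun m => u m n)
    (h_refl n) (h_tri n) (le_idx hn) fun j _ hj =>
      (hN j n ((hN_mono.monotone hj.le).trans (N_idx_le hn))).le
  have h_pos : (0 : ℝ) < (1 / 2 : ℝ) ^ idx n := by positivity
  linarith

theorem exists_tendsto_limsupDist_of_cauchy (h_nonneg : ∀ n a b, 0 ≤ d n a b)
    (h_refl : ∀ n a, d n a a = 0) (h_tri : ∀ n a b c, d n a c ≤ d n a b + d n b c)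
    (h_bdd : ∀ n a b, d n a b ≤ L) {S : ℕ → ∀ n, X n}
    (hS : ∀ ε : ℝ, 0 < ε → ∃ M : ℕ, ∀ j k : ℕ, M ≤ j → M ≤ k → limsupDist d (S j) (S k) < ε) :
    ∃ B : ∀ n, X n, Tendsto (fun j => limsupDist d (S j) B) atTop (nhds 0) := by
  obtain ⟨φ, hφ_mono, hφ⟩ : ∃ φ : ℕ → ℕ, StrictMono φ ∧
      ∀ k j i, φ k ≤ j → φ k ≤ i → limsupDist d (S j) (S i) < (1 / 2 : ℝ) ^ k :=
    extraction_forall_of_eventually' fun k =>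
      let ⟨M, hM⟩ := hS _ (pow_pos one_half_pos k)
      ⟨M, fun _ hM' j i hj hi => hM j i (hM'.trans hj) (hM'.trans hi)⟩
  obtain ⟨B, hB⟩ := exists_limsupDist_le_of_limsupDist_succ_lt h_nonneg h_refl h_tri h_bdd
    (u := fun k => S (φ k)) fun k => hφ k _ _ le_rfl (hφ_mono.monotone k.le_succ)
  refine ⟨B, Metric.tendsto_atTop.2 fun ε hε => ?_⟩
  obtain ⟨k, hk⟩ := exists_pow_lt_of_lt_one (div_pos hε three_pos) one_half_lt_one
  refine ⟨φ k, fun j hj => ?_⟩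
  have h_near := hφ k j (φ k) hj le_rfl
  have h_tri_B := limsupDist_triangle h_nonneg h_tri h_bdd (S j) (S (φ k)) B
  rw [Real.dist_0_eq_abs, abs_of_nonneg (limsupDist_nonneg h_nonneg h_bdd _ _)]
  linarith [hB k]

end LimsupDist

theorem stmt_6_general (d : ∀ n : ℕ, Matrix (Fin n) (Fin n) ℂ → Matrix (Fin n) (Fin n) ℂ → ℝ)
    (L : ℝ)
    (h_nonneg : ∀ n A B, 0 ≤ d n A B)
    (h_refl : ∀ n A, d n A A = 0)
    (h_symm : ∀ n A B, d n A B = d n B A)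
    (h_tri : ∀ n A B C, d n A C ≤ d n A B + d n B C)
    (h_bdd : ∀ n A B, d n A B ≤ L) :
    (∀ A B : MatSeq, 0 ≤ Filter.atTop.limsup fun n => d n (A n) (B n)) ∧
    (∀ A : MatSeq, (Filter.atTop.limsup fun n => d n (A n) (A n)) = 0) ∧
    (∀ A B : MatSeq,
      (Filter.atTop.limsup fun n => d n (A n) (B n)) =
        Filter.atTop.limsup fun n => d n (B n) (A n)) ∧
    (∀ A B C : MatSeq,
      (Filter.atTop.limsup fun n => d n (A n) (C n)) ≤
        (Filter.atTop.limsup fun n => d n (A n) (B n)) +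
          Filter.atTop.limsup fun n => d n (B n) (C n)) ∧
    (∀ S : ℕ → MatSeq,
      (∀ ε : ℝ, 0 < ε → ∃ M : ℕ, ∀ j k : ℕ, M ≤ j → M ≤ k →
        (Filter.atTop.limsup fun n => d n (S j n) (S k n)) < ε) →
      ∃ B : MatSeq,
        Tendsto (fun j => Filter.atTop.limsup fun n => d n (S j n) (B n)) atTop (nhds 0)) :=
  ⟨limsupDist_nonneg h_nonneg h_bdd, limsupDist_self h_refl, limsupDist_comm h_symm,
    limsupDist_triangle h_nonneg h_tri h_bdd,
    fun _ hS => exists_tendsto_limsupDist_of_cauchy h_nonneg h_refl h_tri h_bdd hS⟩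

/-- given pseudometrics `d n` on `ℂ^{n×n}` uniformly bounded by `L > 0`,
`d({A_n},{B_n}) = limsup_n d n (A_n) (B_n)` is a complete pseudometric on matrix-sequences:
it is nonnegative, reflexive, symmetric, satisfies the triangle inequality, and every
Cauchy sequence of matrix-sequences converges. -/
theorem stmt_6 (d : ∀ n : ℕ, Matrix (Fin n) (Fin n) ℂ → Matrix (Fin n) (Fin n) ℂ → ℝ)
    (L : ℝ) (hL : 0 < L)
    (h_nonneg : ∀ n A B, 0 ≤ d n A B)
    (h_refl : ∀ n A, d n A A = 0)
    (h_symm : ∀ n A B, d n A B = d n B A)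
    (h_tri : ∀ n A B C, d n A C ≤ d n A B + d n B C)
    (h_bdd : ∀ n A B, d n A B ≤ L) :
    (∀ A B : MatSeq, 0 ≤ Filter.atTop.limsup fun n => d n (A n) (B n)) ∧
    (∀ A : MatSeq, (Filter.atTop.limsup fun n => d n (A n) (A n)) = 0) ∧
    (∀ A B : MatSeq,
      (Filter.atTop.limsup fun n => d n (A n) (B n)) =
        Filter.atTop.limsup fun n => d n (B n) (A n)) ∧
    (∀ A B C : MatSeq,
      (Filter.atTop.limsup fun n => d n (A n) (C n)) ≤
        (Filter.atTop.limsup fun n => d n (A n) (B n)) +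
          Filter.atTop.limsup fun n => d n (B n) (C n)) ∧
    (∀ S : ℕ → MatSeq,
      (∀ ε : ℝ, 0 < ε → ∃ M : ℕ, ∀ j k : ℕ, M ≤ j → M ≤ k →
        (Filter.atTop.limsup fun n => d n (S j n) (S k n)) < ε) →
      ∃ B : MatSeq,
        Tendsto (fun j => Filter.atTop.limsup fun n => d n (S j n) (B n)) atTop (nhds 0)) :=
  stmt_6_general d L h_nonneg h_refl h_symm h_tri h_bdd
end

section
/- Statement (B): 'If {X_n} ∼_λ k is Hermitian and {D_n} are real diagonal with ‖D_n‖₁ = o(n) then {X_n + i·D_n} ∼_λ k' implies Statement (C): 'If {D_n} ∼_GLT k is a sequence of real diagonal matrices and {Y_n} are skew-Hermitian with ‖Y_n‖₁ = o(n), then {D_n + Y_n} ∼_λ k'. -/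
open Filter MeasureTheory
open scoped Matrix
open Asymptotics
open scoped BigOperators

/-!
Write the skew-Hermitian `Y_n` as `U_n (i·Λ_n) U_nᴴ` with `U_n` unitary and `Λ_n` real diagonal.
Conjugating by `U_n` turns `D_n + Y_n` into `X_n + i·Λ_n` with `X_n = U_nᴴ D_n U_n` Hermitian.
The characteristic polynomial (hence the eigenvalues) is invariant under unitary conjugation, so
`{X_n}` inherits the spectral symbol `k` of the Hermitian GLT sequence `{D_n}`, and
`‖Λ_n‖₁ = ‖Y_n‖₁ = o(n)` because the trace norm is invariant under unitary conjugation and under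
multiplication by `i`. Statement (B) applied to `{X_n}` and `{Λ_n}` then gives the claim.
-/

namespace Matrix

theorem isHermitian_diagonal_ofReal {ι : Type*} [DecidableEq ι] (d : ι → ℝ) :
    (diagonal fun i => (d i : ℂ)).IsHermitian :=
  isHermitian_diagonal_of_self_adjoint _ (by ext; simp)

variable {ι : Type*} [Fintype ι] [DecidableEq ι]

theorem charpoly_unitary_conj {R : Type*} [CommRing R] [StarRing R] {U : Matrix ι ι R}
    (hU : U ∈ unitaryGroup ι R) (A : Matrix ι ι R) : (U * A * star U).charpoly = A.charpoly := by
  rw [charpoly_mul_comm, ← Matrix.mul_assoc, Unitary.star_mul_self_of_mem hU, Matrix.one_mul]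

theorem exists_unitary_conj_I_smul_diagonal_of_conjTranspose_eq_neg {Y : Matrix ι ι ℂ}
    (hY : Yᴴ = -Y) : ∃ U ∈ unitaryGroup ι ℂ, ∃ d : ι → ℝ,
      Y = U * (Complex.I • diagonal fun i => (d i : ℂ)) * star U := by
  have hH : (-Complex.I • Y).IsHermitian := by
    simp [IsHermitian, conjTranspose_smul, hY]
  refine ⟨hH.eigenvectorUnitary, hH.eigenvectorUnitary.2, hH.eigenvalues, ?_⟩
  calc Y = Complex.I • (-Complex.I • Y) := by simp [smul_smul]
    _ = _ := congrArg (Complex.I • ·) hH.spectral_theorem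
    _ = _ := by simp [Function.comp_def]

end Matrix

open Matrix

theorem traceNorm_eq_of_charpoly_eq {n : ℕ} {A B : Matrix (Fin n) (Fin n) ℂ}
    (h : (Aᴴ * A).charpoly = (Bᴴ * B).charpoly) : traceNorm A = traceNorm B := by
  have heig := ((isHermitian_conjTranspose_mul_self A).eigenvalues_eq_eigenvalues_iff
    (isHermitian_conjTranspose_mul_self B)).mpr h
  simp only [traceNorm, singVals, heig]

theorem traceNorm_unitary_conj {n : ℕ} {U : Matrix (Fin n) (Fin n) ℂ}
    (hU : U ∈ unitaryGroup (Fin n) ℂ) (A : Matrix (Fin n) (Fin n) ℂ) :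
    traceNorm (U * A * star U) = traceNorm A := by
  apply traceNorm_eq_of_charpoly_eq
  have : (U * A * star U)ᴴ * (U * A * star U) = U * (Aᴴ * A) * star U := by
    have hUU : Uᴴ * U = 1 := Unitary.star_mul_self_of_mem hU
    simp only [star_eq_conjTranspose, conjTranspose_mul, conjTranspose_conjTranspose,
      Matrix.mul_assoc]
    rw [← Matrix.mul_assoc Uᴴ U, hUU, Matrix.one_mul]
  rw [this, charpoly_unitary_conj hU]

theorem traceNorm_smul_of_norm_eq_one {n : ℕ} {c : ℂ} (hc : ‖c‖ = 1)
    (A : Matrix (Fin n) (Fin n) ℂ) : traceNorm (c • A) = traceNorm A := by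
  apply traceNorm_eq_of_charpoly_eq
  have hcc : star c * c = 1 := by
    rw [Complex.star_def, Complex.conj_mul', hc]
    simp
  rw [conjTranspose_smul, Matrix.smul_mul, Matrix.mul_smul, smul_smul, hcc, one_smul]

theorem SymbolOf.of_charpoly_eq {q : ℕ} {A B : MatSeq} {D : Set (Fin q → ℝ)}
    {k : (Fin q → ℝ) → ℂ} (hA : SymbolOf A D k) (h : ∀ n, (A n).charpoly = (B n).charpoly) :
    SymbolOf B D k := by
  have heigs : ∀ n, eigs (B n) = eigs (A n) := fun n => by unfold eigs; rw [h n]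
  obtain ⟨hD, hD₀, hDtop, hlim⟩ := hA
  exact ⟨hD, hD₀, hDtop, fun F hF hFc => by simpa only [heigs] using hlim F hF hFc⟩

/-- for any notion of GLT sequence such that Hermitian GLT sequences have
their GLT symbol as spectral symbol, Statement (B) — Hermitian `{X_n} ∼_λ k` plus real
diagonal `{D_n}` with `‖D_n‖₁ = o(n)` gives `{X_n + i·D_n} ∼_λ k` — implies Statement (C):
if `{D_n} ∼_GLT k` is a sequence of real diagonal matrices and `{Y_n}` are skew-Hermitian
with `‖Y_n‖₁ = o(n)`, then `{D_n + Y_n} ∼_λ k`. -/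
theorem stmt_17
    (GLT : ∀ {q : ℕ}, MatSeq → Set (Fin q → ℝ) → ((Fin q → ℝ) → ℂ) → Prop)
    (hGLTspec : ∀ {q : ℕ} (A : MatSeq) (D : Set (Fin q → ℝ)) (k : (Fin q → ℝ) → ℂ),
      (∀ n, (A n).IsHermitian) → GLT A D k → SymbolOf A D k)
    (hB : ∀ (q : ℕ) (D : Set (Fin q → ℝ)) (k : (Fin q → ℝ) → ℂ) (X : MatSeq)
      (Dn : (n : ℕ) → Fin n → ℝ),
      (∀ n, (X n).IsHermitian) → SymbolOf X D k →
      (fun n => traceNorm (Matrix.diagonal fun i => ((Dn n i : ℂ)))) =o[atTop]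
        (fun n : ℕ => (n : ℝ)) →
      SymbolOf (fun n => X n + Complex.I • Matrix.diagonal fun i => ((Dn n i : ℂ))) D k) :
    ∀ (q : ℕ) (D : Set (Fin q → ℝ)) (k : (Fin q → ℝ) → ℂ)
      (Dn : (n : ℕ) → Fin n → ℝ) (Y : MatSeq),
      GLT (fun n => Matrix.diagonal fun i => ((Dn n i : ℂ))) D k →
      (∀ n, (Y n)ᴴ = -(Y n)) →
      (fun n => traceNorm (Y n)) =o[atTop] (fun n : ℕ => (n : ℝ)) →
      SymbolOf (fun n => (Matrix.diagonal fun i => ((Dn n i : ℂ))) + Y n) D k := by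
  intro q D k Dn Y hGLT hY hYo
  choose U hU d hYd using fun n =>
    exists_unitary_conj_I_smul_diagonal_of_conjTranspose_eq_neg (hY n)
  set X : MatSeq := fun n => star (U n) * diagonal (fun i => (Dn n i : ℂ)) * U n
  have hXherm : ∀ n, (X n).IsHermitian := fun n =>
    isHermitian_conjTranspose_mul_mul _ (isHermitian_diagonal_ofReal (Dn n))
  have hX : SymbolOf X D k :=
    (hGLTspec _ D k (fun n => isHermitian_diagonal_ofReal (Dn n)) hGLT).of_charpoly_eq
      fun n => by simpa using (charpoly_unitary_conj (Unitary.star_mem (hU n)) _).symm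
  have hd : (fun n => traceNorm (diagonal fun i => (d n i : ℂ))) =o[atTop]
      (fun n : ℕ => (n : ℝ)) :=
    hYo.congr_left fun n => by
      rw [hYd n, traceNorm_unitary_conj (hU n), traceNorm_smul_of_norm_eq_one (by simp)]
  have hconj : ∀ n, U n * (X n + Complex.I • diagonal fun i => (d n i : ℂ)) * star (U n) =
      diagonal (fun i => (Dn n i : ℂ)) + Y n := fun n => by
    have hUU := Unitary.mul_star_self_of_mem (hU n)
    rw [hYd n, Matrix.mul_add, Matrix.add_mul, ← Matrix.mul_assoc, ← Matrix.mul_assoc, hUU,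
      Matrix.one_mul, Matrix.mul_assoc, hUU, Matrix.mul_one]
  exact (hB q D k X d hXherm hX hd).of_charpoly_eq fun n => by
    rw [← hconj n, charpoly_unitary_conj (hU n)]
end
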